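/- For every r ≥ 5 and every n ≥ r·2^r·2^{2^r}, the inequality n^r · 2^{2^r} · (1 − 2^{−2^r})^{n−r} < 1 holds; consequently (since this expression bounds above the probability that a medial-regime random simplicial complex with p = 1/2 on n vertices fails to be r-ample) there exists an r-ample simplicial complex with exactly n vertices. -/

import Mathlib

/-!
Flip a fair coin for every set of vertices and let `s` be a face when every subset of `s`
with at least two elements came up heads: this is the medial random complex with `p = 1/2`,
and we count coin outcomes instead of computing probabilities.

Fix `U` with `|U| = r` and a subcomplex `A` of the complex induced on `U`. For `v ∉ U`, whether
the link of `v` meets the induced complex in exactly `A` depends only on the at most `2^r` coins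
of the sets `{v} ∪ t` with `t ⊆ U`, and whatever the other coins are, some setting of these
realizes `A`. So, given all other coins, `v` fails with probability at most `1 - 2^(-2^r)`,
independently for the `n - r` vertices outside `U`. A union bound over the at most `n^r` sets
`U` and `2^(2^r)` sets `A` bounds the probability of not being `r`-ample by
`n^r · 2^(2^r) · (1 - 2^(-2^r))^(n-r)`. This is `< 1` at `n = r·2^r·2^(2^r)` by
`(1 - x)^m ≤ exp(-m x)` and an estimate of logarithms, and it decreases beyond the threshold by
Bernoulli's inequality.
-/

/-- An abstract simplicial complex on a vertex type `V`. -/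
structure SimplicialComplex (V : Type*) where
  faces : Set (Finset V)
  not_empty_mem : ∅ ∉ faces
  down_closed : ∀ s ∈ faces, ∀ t ⊆ s, t ≠ ∅ → t ∈ faces

namespace SimplicialComplex

variable {V : Type*}

def vertexSet (X : SimplicialComplex V) : Set V := {v | ({v} : Finset V) ∈ X.faces}

def inducedFaces (X : SimplicialComplex V) (U : Set V) : Set (Finset V) :=
  {s | s ∈ X.faces ∧ ↑s ⊆ U}

def IsSubcomplexOfInduced (X : SimplicialComplex V) (U : Set V) (A : Set (Finset V)) : Prop :=
  A ⊆ X.inducedFaces U ∧ ∀ s ∈ A, ∀ t ⊆ s, t ≠ ∅ → t ∈ A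

def linkFaces [DecidableEq V] (X : SimplicialComplex V) (v : V) : Set (Finset V) :=
  {s | v ∉ s ∧ s ≠ ∅ ∧ insert v s ∈ X.faces}

/-- `X` is `r`-ample. -/
def IsAmple [DecidableEq V] (X : SimplicialComplex V) (r : ℕ) : Prop :=
  X.faces.Nonempty ∧
  ∀ U : Finset V, ↑U ⊆ X.vertexSet → U.card ≤ r →
    ∀ A : Set (Finset V), X.IsSubcomplexOfInduced ↑U A →
      ∃ v ∈ X.vertexSet, v ∉ U ∧ X.linkFaces v ∩ X.inducedFaces ↑U = A

end SimplicialComplex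

open Finset

theorem card_filter_not_mul_le {α β : Type*} [DecidableEq β] {S : Finset α} {π : α → β} {k : ℕ}
    {P : α → Prop} [DecidablePred P]
    (hfiber : ∀ a ∈ S, #{b ∈ S | π b = π a} = k)
    (hgood : ∀ a ∈ S, ∃ b ∈ S, π b = π a ∧ P b) :
    (#{a ∈ S | ¬P a} : ℝ) * k ≤ #S * (k - 1) := by
  have hS : #S = #(S.image π) * k := by
    rw [card_eq_sum_card_image π S, sum_const_nat]
    intro y hy
    obtain ⟨a, ha, rfl⟩ := mem_image.1 hy
    exact hfiber a ha
  have hbad_fiber : ∀ y ∈ S.image π, #{a ∈ {a ∈ S | ¬P a} | π a = y} + 1 ≤ k := by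
    intro y hy
    obtain ⟨a, ha, rfl⟩ := mem_image.1 hy
    obtain ⟨b, hb, hπ, hP⟩ := hgood a ha
    rw [← hfiber a ha, Nat.add_one_le_iff]
    refine card_lt_card ((ssubset_iff_of_subset ?_).2 ⟨b, mem_filter.2 ⟨hb, hπ⟩, ?_⟩)
    · exact fun x hx => by simp only [mem_filter] at hx ⊢; exact ⟨hx.1.1, hx.2⟩
    · simp [hP]
  have hbad : (#{a ∈ S | ¬P a} : ℝ) ≤ #(S.image π) * (k - 1) := by
    rw [card_eq_sum_card_fiberwise (f := π) (t := S.image π)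
      (fun a ha => mem_image_of_mem π (mem_filter.1 ha).1), Nat.cast_sum]
    refine (sum_le_card_nsmul _ _ _ fun y hy => ?_).trans_eq (nsmul_eq_mul _ _)
    have := hbad_fiber y hy
    rw [le_sub_iff_add_le]
    exact_mod_cast this
  calc (#{a ∈ S | ¬P a} : ℝ) * k ≤ #(S.image π) * (k - 1) * k := by gcongr
    _ = #S * (k - 1) := by rw [hS]; push_cast; ring

theorem card_filter_not_le_of_resample {ι : Type*} [Fintype ι] [DecidableEq ι] {C : Finset ι}
    {S : Finset (ι → Bool)} {P : (ι → Bool) → Prop} [DecidablePred P]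
    (hS : ∀ f ∈ S, ∀ g, (∀ i ∉ C, g i = f i) → g ∈ S)
    (hP : ∀ f ∈ S, ∃ g, (∀ i ∉ C, g i = f i) ∧ P g) :
    (#{f ∈ S | ¬P f} : ℝ) ≤ (1 - (1 / 2) ^ #C) * #S := by
  set π : (ι → Bool) → ({i // i ∉ C} → Bool) := fun f i => f i
  have hπ : ∀ f g, π g = π f ↔ ∀ i ∉ C, g i = f i := by
    simp [π, funext_iff]
  have hfiber : ∀ f ∈ S, #{g ∈ S | π g = π f} = 2 ^ #C := by
    intro f hf
    have : {g ∈ S | π g = π f} =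
        Fintype.piFinset fun i => if i ∈ C then univ else {f i} := by
      ext g
      simp only [mem_filter, hπ, Fintype.mem_piFinset]
      refine ⟨fun h i => ?_, fun h => ⟨hS f hf g fun i hi => ?_, fun i hi => ?_⟩⟩
      · split_ifs with hi <;> simp [h.2 i, hi]
      all_goals simpa [hi] using h i
    rw [this, Fintype.card_piFinset]
    simp [apply_ite card, prod_ite_mem]
  have hgood : ∀ f ∈ S, ∃ g ∈ S, π g = π f ∧ P g := by
    intro f hf
    obtain ⟨g, hgf, hg⟩ := hP f hf
    exact ⟨g, hS f hf g hgf, (hπ f g).2 hgf, hg⟩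
  have key := card_filter_not_mul_le hfiber hgood
  have hpos : (0 : ℝ) < 2 ^ #C := by positivity
  rw [div_pow, one_pow, one_sub_div hpos.ne', div_mul_eq_mul_div, le_div_iff₀ hpos]
  push_cast at key
  linarith

open Real

theorem three_mul_sq_le_two_mul_two_pow {r : ℕ} (hr : 6 ≤ r) : 3 * r ^ 2 ≤ 2 * 2 ^ r := by
  induction r, hr using Nat.le_induction with
  | base => norm_num
  | succ k hk ih => rw [pow_succ 2 k]; nlinarith [Nat.mul_le_mul hk hk]

theorem log_five_le : log 5 ≤ 2 * log 2 + 1 / 4 := by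
  have h : log (5 / 4 : ℝ) ≤ 5 / 4 - 1 := log_le_sub_one_of_pos (by norm_num)
  rw [log_div (by norm_num) (by norm_num), show (4 : ℝ) = 2 ^ 2 by norm_num, log_pow] at h
  push_cast at h
  linarith

-- At `r = 5` this reads `159.6… ≤ 160`, hence the sharper estimate of `log 5`.
theorem mul_log_add_le_mul_two_pow {r : ℕ} (hr : 5 ≤ r) :
    r * log r + (r ^ 2 + (r + 1) * 2 ^ r) * log 2 + 1 ≤ (r : ℝ) * 2 ^ r := by
  have hlog2 := log_two_lt_d9
  obtain rfl | hr6 := hr.eq_or_lt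
  · norm_num
    linarith [log_five_le]
  · have hlogr : log r ≤ r * log 2 := by
      rw [← log_pow]
      exact log_le_log (by positivity) (by exact_mod_cast Nat.lt_two_pow_self.le)
    have hsq : (3 : ℝ) * r ^ 2 ≤ 2 * 2 ^ r := by exact_mod_cast three_mul_sq_le_two_mul_two_pow hr6
    have h6 : (6 : ℝ) ≤ r := by exact_mod_cast hr6
    have h64 : (64 : ℝ) ≤ 2 ^ r := by
      calc (64 : ℝ) = 2 ^ 6 := by norm_num
        _ ≤ 2 ^ r := pow_le_pow_right₀ one_le_two hr6
    have hlog2pos : 0 < log 2 := log_pos one_lt_two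
    nlinarith [mul_le_mul_of_nonneg_left hlogr (Nat.cast_nonneg r),
      mul_le_mul_of_nonneg_left hsq hlog2pos.le,
      mul_nonneg (sub_nonneg.2 h6) (by positivity : (0 : ℝ) ≤ 2 ^ r),
      mul_nonneg (sub_nonneg.2 hlog2.le) (by positivity : (0 : ℝ) ≤ r * 2 ^ r)]

theorem le_mul_two_pow_mul_two_pow (r : ℕ) : r ≤ r * 2 ^ r * 2 ^ 2 ^ r :=
  (Nat.le_mul_of_pos_right r (by positivity)).trans (Nat.le_mul_of_pos_right _ (by positivity))

theorem one_sub_half_pow_nonneg (k : ℕ) : (0 : ℝ) ≤ 1 - (1 / 2) ^ k :=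
  sub_nonneg.2 (pow_le_one₀ (by norm_num) (by norm_num))

noncomputable def failureBound (r n : ℕ) : ℝ :=
  n ^ r * 2 ^ 2 ^ r * (1 - (1 / 2 : ℝ) ^ 2 ^ r) ^ (n - r)

theorem succ_pow_mul_one_sub_le {n r : ℕ} {x : ℝ} (h : r ≤ x * (n + 1)) :
    ((n : ℝ) + 1) ^ r * (1 - x) ≤ n ^ r := by
  have hn : (0 : ℝ) < n + 1 := by positivity
  have hbernoulli := one_add_mul_le_pow (a := -(1 / ((n : ℝ) + 1)))
    (by linarith [div_le_one_of_le₀ (by linarith : (1 : ℝ) ≤ n + 1) hn.le]) r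
  have hx : 1 - x ≤ 1 + r * -(1 / ((n : ℝ) + 1)) := by
    have : (r : ℝ) / (n + 1) ≤ x := by rwa [div_le_iff₀ hn]
    linarith [show (r : ℝ) * -(1 / ((n : ℝ) + 1)) = -(r / (n + 1)) by ring]
  calc ((n : ℝ) + 1) ^ r * (1 - x)
      ≤ ((n : ℝ) + 1) ^ r * (1 + -(1 / ((n : ℝ) + 1))) ^ r := by gcongr; linarith
    _ = n ^ r := by rw [← mul_pow]; congr 1; field_simp; ring

theorem failureBound_succ_le {r n : ℕ} (hrn : r ≤ n) (h : r * 2 ^ 2 ^ r ≤ n + 1) :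
    failureBound r (n + 1) ≤ failureBound r n := by
  set x : ℝ := (1 / 2) ^ 2 ^ r
  have hθ : 0 ≤ 1 - x := one_sub_half_pow_nonneg _
  have hstep : ((n : ℝ) + 1) ^ r * (1 - x) ≤ n ^ r := by
    refine succ_pow_mul_one_sub_le ?_
    calc (r : ℝ) = x * (r * 2 ^ 2 ^ r) := by rw [mul_left_comm, ← mul_pow]; norm_num
      _ ≤ x * (n + 1) := by gcongr; exact_mod_cast h
  unfold failureBound
  rw [show n + 1 - r = n - r + 1 by omega, pow_succ]
  push_cast
  calc ((n : ℝ) + 1) ^ r * 2 ^ 2 ^ r * ((1 - x) ^ (n - r) * (1 - x))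
      = ((n + 1) ^ r * (1 - x)) * (2 ^ 2 ^ r * (1 - x) ^ (n - r)) := by ring
    _ ≤ n ^ r * (2 ^ 2 ^ r * (1 - x) ^ (n - r)) := by gcongr
    _ = n ^ r * 2 ^ 2 ^ r * (1 - x) ^ (n - r) := by ring

theorem failureBound_threshold_lt_one {r : ℕ} (hr : 5 ≤ r) :
    failureBound r (r * 2 ^ r * 2 ^ 2 ^ r) < 1 := by
  set N := r * 2 ^ r * 2 ^ 2 ^ r
  set x : ℝ := (1 / 2) ^ 2 ^ r
  have hx : x * 2 ^ 2 ^ r = 1 := by simp only [x, ← mul_pow]; norm_num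
  have hθ : 0 ≤ 1 - x := one_sub_half_pow_nonneg _
  have hrN : r ≤ N := le_mul_two_pow_mul_two_pow r
  have hrx : r * x < 1 := by
    have : (r : ℝ) < 2 ^ 2 ^ r := by
      exact_mod_cast Nat.lt_two_pow_self.trans (Nat.pow_lt_pow_right one_lt_two Nat.lt_two_pow_self)
    nlinarith [show 0 < x by positivity]
  have hmx : ((N - r : ℕ) : ℝ) * x = r * 2 ^ r - r * x := by
    rw [Nat.cast_sub hrN]; push_cast [N]; linear_combination (r * 2 ^ r : ℝ) * hx
  have hlog : log ((N : ℝ) ^ r * 2 ^ 2 ^ r) = r * log r + (r ^ 2 + (r + 1) * 2 ^ r) * log 2 := by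
    push_cast [N]
    rw [log_mul (by positivity) (by positivity), log_pow, log_mul (by positivity) (by positivity),
      log_mul (by positivity) (by positivity), log_pow, log_pow]
    push_cast; ring
  calc failureBound r N = (N : ℝ) ^ r * 2 ^ 2 ^ r * (1 - x) ^ (N - r) := rfl
    _ ≤ (N : ℝ) ^ r * 2 ^ 2 ^ r * exp (-x) ^ (N - r) := by
        gcongr
        linarith [add_one_le_exp (-x)]
    _ = exp (log ((N : ℝ) ^ r * 2 ^ 2 ^ r) - (N - r : ℕ) * x) := by
        rw [← exp_nat_mul, exp_sub, exp_log (by positivity), mul_neg, exp_neg, div_eq_mul_inv]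
    _ < 1 := by
        rw [exp_lt_one_iff, hlog, hmx]
        linarith [mul_log_add_le_mul_two_pow hr]

theorem failureBound_lt_one {r n : ℕ} (hr : 5 ≤ r) (hn : r * 2 ^ r * 2 ^ 2 ^ r ≤ n) :
    failureBound r n < 1 := by
  have hrQ : r * 2 ^ 2 ^ r ≤ r * 2 ^ r * 2 ^ 2 ^ r := by
    gcongr; exact Nat.le_mul_of_pos_right _ (by positivity)
  have hrr : r ≤ r * 2 ^ 2 ^ r := Nat.le_mul_of_pos_right _ (by positivity)
  induction n, hn using Nat.le_induction with
  | base => exact failureBound_threshold_lt_one hr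
  | succ n hn ih => exact (failureBound_succ_le (by omega) (by omega)).trans_lt ih

namespace SimplicialComplex

variable {V : Type*}

theorem IsSubcomplexOfInduced.mono {X : SimplicialComplex V} {U₀ U : Set V} {A : Set (Finset V)}
    (hA : X.IsSubcomplexOfInduced U₀ A) (hU : U₀ ⊆ U) : X.IsSubcomplexOfInduced U A :=
  ⟨fun _ hs => ⟨(hA.1 hs).1, (hA.1 hs).2.trans hU⟩, hA.2⟩

theorem IsSubcomplexOfInduced.eq_coe_filter {X : SimplicialComplex V} {U : Finset V}
    {A : Set (Finset V)} [DecidablePred (· ∈ A)] (hA : X.IsSubcomplexOfInduced U A) :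
    A = ↑({s ∈ U.powerset | s ∈ A} : Finset (Finset V)) := by
  ext s
  simpa using fun hs => coe_subset.1 (hA.1 hs).2

def AllHeads (f : Finset V → Bool) (s : Finset V) : Prop :=
  ∀ t ⊆ s, 2 ≤ #t → f t = true

def ofCoins (f : Finset V → Bool) : SimplicialComplex V where
  faces := {s | s.Nonempty ∧ AllHeads f s}
  not_empty_mem h := not_nonempty_empty h.1
  down_closed _ hs _ hts ht := ⟨nonempty_iff_ne_empty.2 ht, fun u hu => hs.2 u (hu.trans hts)⟩

variable {f g : Finset V → Bool}

theorem mem_faces_ofCoins {s : Finset V} : s ∈ (ofCoins f).faces ↔ s.Nonempty ∧ AllHeads f s :=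
  Iff.rfl

theorem vertexSet_ofCoins (f : Finset V → Bool) : (ofCoins f).vertexSet = Set.univ := by
  refine Set.eq_univ_of_forall fun v => ⟨singleton_nonempty v, fun t ht h2 => ?_⟩
  have := card_le_card ht
  rw [card_singleton] at this
  omega

theorem mem_faces_ofCoins_congr {v : V} {s : Finset V} (h : ∀ x, v ∉ x → g x = f x) (hs : v ∉ s) :
    s ∈ (ofCoins g).faces ↔ s ∈ (ofCoins f).faces := by
  have hts : ∀ t ⊆ s, g t = f t := fun t ht => h t fun hv => hs (ht hv)
  simp only [mem_faces_ofCoins, AllHeads]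
  exact and_congr_right fun _ => forall₂_congr fun t ht => by rw [hts t ht]

theorem inducedFaces_ofCoins_congr {v : V} {U : Set V} (h : ∀ x, v ∉ x → g x = f x) (hv : v ∉ U) :
    (ofCoins g).inducedFaces U = (ofCoins f).inducedFaces U := by
  ext s
  exact and_congr_left fun hs => mem_faces_ofCoins_congr h fun hvs => hv (hs hvs)

variable [DecidableEq V]

theorem linkFaces_inter_inducedFaces_of_subset (X : SimplicialComplex V) {v : V} {U₀ U : Set V}
    {A : Set (Finset V)} (hU : U₀ ⊆ U) (hA : A ⊆ X.inducedFaces U₀)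
    (h : X.linkFaces v ∩ X.inducedFaces U = A) : X.linkFaces v ∩ X.inducedFaces U₀ = A := by
  refine Set.Subset.antisymm (fun s ⟨hl, hs, hsU⟩ => ?_) fun s hs => ⟨(h ▸ hs).1, hA hs⟩
  exact h ▸ ⟨hl, hs, hsU.trans hU⟩

theorem linkFaces_inter_inducedFaces_ofCoins_congr {v w : V} {U : Set V}
    (h : ∀ x, v ∉ x → g x = f x) (hv : v ∉ U) (hw : w ≠ v) :
    (ofCoins g).linkFaces w ∩ (ofCoins g).inducedFaces U =
      (ofCoins f).linkFaces w ∩ (ofCoins f).inducedFaces U := by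
  rw [inducedFaces_ofCoins_congr h hv]
  ext s
  refine and_congr_left fun ⟨_, hsU⟩ => and_congr_right fun _ => and_congr_right fun _ => ?_
  refine mem_faces_ofCoins_congr h fun hvs => ?_
  rcases mem_insert.1 hvs with hvw | hvs
  · exact hw hvw.symm
  · exact hv (hsU hvs)

def linkCoords (v : V) (U : Finset V) : Finset (Finset V) :=
  {x ∈ (insert v U).powerset | v ∈ x}

theorem mem_linkCoords {v : V} {U x : Finset V} : x ∈ linkCoords v U ↔ x ⊆ insert v U ∧ v ∈ x := by
  simp [linkCoords]

theorem card_linkCoords_le (v : V) (U : Finset V) : #(linkCoords v U) ≤ 2 ^ #U := by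
  rw [← card_powerset]
  refine card_le_card_of_injOn (·.erase v) (fun x hx => ?_) fun x hx y hy => ?_
  · exact mem_powerset.2 (subset_insert_iff.1 (mem_linkCoords.1 hx).1)
  · exact erase_injOn' v (mem_linkCoords.1 hx).2 (mem_linkCoords.1 hy).2

open scoped Classical in
noncomputable def resample (f : Finset V → Bool) (v : V) (U : Finset V) (A : Set (Finset V)) :
    Finset V → Bool :=
  fun x => if x ∈ linkCoords v U then decide (x.erase v ∈ A) else f x

theorem resample_apply_of_notMem_linkCoords {v : V} {U x : Finset V} {A : Set (Finset V)}
    (hx : x ∉ linkCoords v U) : resample f v U A x = f x := by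
  simp [resample, hx]

theorem resample_apply_of_notMem {v : V} {U x : Finset V} {A : Set (Finset V)} (hvx : v ∉ x) :
    resample f v U A x = f x :=
  resample_apply_of_notMem_linkCoords fun hx => hvx (mem_linkCoords.1 hx).2

theorem linkFaces_inter_inducedFaces_resample {v : V} {U : Finset V} {A : Set (Finset V)}
    (hv : v ∉ U) (hA : (ofCoins f).IsSubcomplexOfInduced U A) :
    (ofCoins (resample f v U A)).linkFaces v ∩ (ofCoins (resample f v U A)).inducedFaces U
      = A := by
  have hagree : ∀ x, v ∉ x → resample f v U A x = f x := fun x => resample_apply_of_notMem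
  rw [inducedFaces_ofCoins_congr hagree (by simpa using hv)]
  ext s
  constructor
  · rintro ⟨⟨hvs, hne, hins⟩, hsU⟩
    have hmem : insert v s ∈ linkCoords v U :=
      mem_linkCoords.2 ⟨insert_subset_insert v (coe_subset.1 hsU.2), mem_insert_self v s⟩
    have h2 : 2 ≤ #(insert v s) := by
      rw [card_insert_of_notMem hvs]
      exact Nat.succ_le_succ (card_pos.2 (nonempty_iff_ne_empty.2 hne))
    simpa [resample, hmem, erase_insert hvs] using hins.2 _ subset_rfl h2
  · intro hs
    have hsU := hA.1 hs
    have hvs : v ∉ s := fun hvs => hv (coe_subset.1 hsU.2 hvs)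
    refine ⟨⟨hvs, nonempty_iff_ne_empty.1 hsU.1.1, insert_nonempty v s, fun t ht h2 => ?_⟩, hsU⟩
    by_cases hvt : v ∈ t
    · have hmem : t ∈ linkCoords v U :=
        mem_linkCoords.2 ⟨ht.trans (insert_subset_insert v (coe_subset.1 hsU.2)), hvt⟩
      have hne : t.erase v ≠ ∅ := by
        rw [← nonempty_iff_ne_empty, ← card_pos, card_erase_of_mem hvt]
        omega
      simpa [resample, hmem] using hA.2 s hs _ (subset_insert_iff.1 ht) hne
    · rw [resample_apply_of_notMem hvt]
      exact hsU.1.2 t ((subset_insert_iff_of_notMem hvt).1 ht) h2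

variable [Fintype V] {f : Finset V → Bool} {U : Finset V} {A : Set (Finset V)}

open scoped Classical in
noncomputable def unrealizedOutcomes (U : Finset V) (A : Set (Finset V)) (W : Finset V) :
    Finset (Finset V → Bool) :=
  {f | (ofCoins f).IsSubcomplexOfInduced U A ∧
    ∀ v ∈ W, (ofCoins f).linkFaces v ∩ (ofCoins f).inducedFaces U ≠ A}

theorem mem_unrealizedOutcomes {W : Finset V} :
    f ∈ unrealizedOutcomes U A W ↔ (ofCoins f).IsSubcomplexOfInduced U A ∧
      ∀ v ∈ W, (ofCoins f).linkFaces v ∩ (ofCoins f).inducedFaces U ≠ A := by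
  simp [unrealizedOutcomes]

theorem card_unrealizedOutcomes_insert_le {v : V} {W : Finset V} (hvU : v ∉ U) (hvW : v ∉ W) :
    (#(unrealizedOutcomes U A (insert v W)) : ℝ) ≤
      (1 - (1 / 2) ^ 2 ^ #U) * #(unrealizedOutcomes U A W) := by
  classical
  have hfilter : unrealizedOutcomes U A (insert v W) = {f ∈ unrealizedOutcomes U A W |
      ¬(ofCoins f).linkFaces v ∩ (ofCoins f).inducedFaces U = A} := by
    ext f
    simp only [mem_unrealizedOutcomes, mem_filter, forall_mem_insert]
    tauto
  have hvU' : v ∉ (U : Set V) := by simpa using hvU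
  have hclosed : ∀ f ∈ unrealizedOutcomes U A W, ∀ g, (∀ x ∉ linkCoords v U, g x = f x) →
      g ∈ unrealizedOutcomes U A W := by
    intro f hf g hg
    have hagree : ∀ x, v ∉ x → g x = f x := fun x hvx => hg x fun hx => hvx (mem_linkCoords.1 hx).2
    rw [mem_unrealizedOutcomes] at hf ⊢
    refine ⟨?_, fun w hw => ?_⟩
    · rw [IsSubcomplexOfInduced, inducedFaces_ofCoins_congr hagree hvU']
      exact hf.1
    · rw [linkFaces_inter_inducedFaces_ofCoins_congr hagree hvU' (ne_of_mem_of_not_mem hw hvW)]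
      exact hf.2 w hw
  have hrealizable : ∀ f ∈ unrealizedOutcomes U A W, ∃ g, (∀ x ∉ linkCoords v U, g x = f x) ∧
      (ofCoins g).linkFaces v ∩ (ofCoins g).inducedFaces U = A := fun f hf =>
    ⟨resample f v U A, fun _ hx => resample_apply_of_notMem_linkCoords hx,
      linkFaces_inter_inducedFaces_resample hvU (mem_unrealizedOutcomes.1 hf).1⟩
  have hcoins : (1 / 2 : ℝ) ^ 2 ^ #U ≤ (1 / 2) ^ #(linkCoords v U) :=
    pow_le_pow_of_le_one (by norm_num) (by norm_num) (card_linkCoords_le v U)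
  rw [hfilter]
  refine (card_filter_not_le_of_resample hclosed hrealizable).trans ?_
  gcongr

theorem card_unrealizedOutcomes_le (U : Finset V) (A : Set (Finset V)) {W : Finset V}
    (hW : Disjoint W U) :
    (#(unrealizedOutcomes U A W) : ℝ) ≤
      (1 - (1 / 2) ^ 2 ^ #U) ^ #W * Fintype.card (Finset V → Bool) := by
  have hθ := one_sub_half_pow_nonneg (2 ^ #U)
  induction W using Finset.induction_on with
  | empty =>
    simp only [card_empty, pow_zero, one_mul]
    exact_mod_cast card_le_univ _
  | insert v W hvW ih =>
    rw [disjoint_insert_left] at hW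
    calc (#(unrealizedOutcomes U A (insert v W)) : ℝ)
        ≤ (1 - (1 / 2) ^ 2 ^ #U) * #(unrealizedOutcomes U A W) :=
          card_unrealizedOutcomes_insert_le hW.1 hvW
      _ ≤ (1 - (1 / 2) ^ 2 ^ #U) * ((1 - (1 / 2) ^ 2 ^ #U) ^ #W *
          Fintype.card (Finset V → Bool)) := by gcongr; exact ih hW.2
      _ = _ := by rw [card_insert_of_notMem hvW]; ring

theorem exists_unrealizedOutcomes_of_not_isAmple [Nonempty V] {r : ℕ}
    (hr : r ≤ Fintype.card V) (h : ¬(ofCoins f).IsAmple r) :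
    ∃ U ∈ powersetCard r univ, ∃ A ∈ U.powerset.powerset, f ∈ unrealizedOutcomes U ↑A Uᶜ := by
  classical
  have hne : (ofCoins f).faces.Nonempty :=
    ⟨_, show Classical.arbitrary V ∈ (ofCoins f).vertexSet by simp [vertexSet_ofCoins]⟩
  rw [IsAmple] at h
  push Not at h
  obtain ⟨U₀, -, hU₀, A, hA, hfail⟩ := h hne
  obtain ⟨U, hU₀U, -, hU⟩ := exists_subsuperset_card_eq (subset_univ U₀) hU₀ (by simpa using hr)
  have hAU := hA.mono (coe_subset.2 hU₀U)
  refine ⟨U, mem_powersetCard_univ.2 hU, {s ∈ U.powerset | s ∈ A},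
    mem_powerset.2 (filter_subset _ _), ?_⟩
  rw [← hAU.eq_coe_filter, mem_unrealizedOutcomes]
  refine ⟨hAU, fun v hv heq => hfail v (by simp [vertexSet_ofCoins]) (fun hvU₀ => ?_) ?_⟩
  · exact mem_compl.1 hv (hU₀U hvU₀)
  · exact linkFaces_inter_inducedFaces_of_subset _ (coe_subset.2 hU₀U) hA.1 heq

open scoped Classical in
theorem card_not_isAmple_le [Nonempty V] {r : ℕ} (hr : r ≤ Fintype.card V) :
    (#{f : Finset V → Bool | ¬(ofCoins f).IsAmple r} : ℝ) ≤
      failureBound r (Fintype.card V) * Fintype.card (Finset V → Bool) := by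
  set θ : ℝ := 1 - (1 / 2) ^ 2 ^ r
  set M := Fintype.card (Finset V → Bool)
  have hθ : 0 ≤ θ := one_sub_half_pow_nonneg _
  have hcover : ({f | ¬(ofCoins f).IsAmple r} : Finset (Finset V → Bool)) ⊆
      (powersetCard r univ).biUnion fun U =>
        U.powerset.powerset.biUnion fun A => unrealizedOutcomes U ↑A Uᶜ := by
    intro f hf
    obtain ⟨U, hU, A, hA, hfA⟩ := exists_unrealizedOutcomes_of_not_isAmple hr (mem_filter.1 hf).2
    exact mem_biUnion.2 ⟨U, hU, mem_biUnion.2 ⟨A, hA, hfA⟩⟩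
  have hcard : ∀ U ∈ powersetCard r (univ : Finset V), ∀ A : Finset (Finset V),
      (#(unrealizedOutcomes U ↑A Uᶜ) : ℝ) ≤ θ ^ (Fintype.card V - r) * M := by
    intro U hU A
    rw [mem_powersetCard_univ] at hU
    have := card_unrealizedOutcomes_le U (A : Set (Finset V)) disjoint_compl_left
    rwa [card_compl, hU] at this
  calc (#{f : Finset V → Bool | ¬(ofCoins f).IsAmple r} : ℝ)
      ≤ ∑ U ∈ powersetCard r univ, ∑ A ∈ U.powerset.powerset,
          (#(unrealizedOutcomes U ↑A Uᶜ) : ℝ) := by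
        exact_mod_cast (card_le_card hcover).trans
          (card_biUnion_le.trans (sum_le_sum fun U _ => card_biUnion_le))
    _ ≤ ∑ U ∈ powersetCard r univ, ∑ A ∈ U.powerset.powerset, θ ^ (Fintype.card V - r) * M := by
        gcongr with U hU A
        exact hcard U hU A
    _ = (Fintype.card V).choose r * 2 ^ 2 ^ r * θ ^ (Fintype.card V - r) * M := by
        rw [sum_congr rfl fun U hU => by
          rw [sum_const, card_powerset, card_powerset, mem_powersetCard_univ.1 hU]]
        rw [sum_const, card_powersetCard, card_univ]
        simp only [nsmul_eq_mul]
        push_cast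
        ring
    _ ≤ failureBound r (Fintype.card V) * M := by
        unfold failureBound
        gcongr
        exact_mod_cast Nat.choose_le_pow _ _

end SimplicialComplex

open SimplicialComplex in
/-- **Existence of `r`-ample complexes via the probabilistic method** (Proposition 5.4):
for every `r ≥ 5` and every `n ≥ r·2^r·2^(2^r)` the failure-probability bound
`n^r · 2^(2^r) · (1 − 2^(−2^r))^(n−r)` is less than `1`, and consequently there exists
an `r`-ample simplicial complex with exactly `n` vertices. -/
theorem exists_ample_complex (r n : ℕ) (hr : 5 ≤ r) (hn : r * 2 ^ r * 2 ^ 2 ^ r ≤ n) :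
    (n : ℝ) ^ r * 2 ^ 2 ^ r * (1 - (1 / 2 : ℝ) ^ 2 ^ r) ^ (n - r) < 1 ∧
    ∃ X : SimplicialComplex (Fin n), X.vertexSet = Set.univ ∧ X.IsAmple r := by
  have hbound : failureBound r n < 1 := failureBound_lt_one hr hn
  refine ⟨hbound, ?_⟩
  classical
  have hrn : r ≤ n := (le_mul_two_pow_mul_two_pow r).trans hn
  have : Nonempty (Fin n) := ⟨⟨0, by omega⟩⟩
  obtain ⟨f, hf⟩ : ∃ f : Finset (Fin n) → Bool, (ofCoins f).IsAmple r := by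
    by_contra! h
    have hcard := card_not_isAmple_le (V := Fin n) (by simpa using hrn)
    rw [filter_true_of_mem fun f _ => h f, card_univ, Fintype.card_fin] at hcard
    have hM : (0 : ℝ) < Fintype.card (Finset (Fin n) → Bool) := by exact_mod_cast Fintype.card_pos
    linarith [mul_lt_mul_of_pos_right hbound hM]
  exact ⟨ofCoins f, vertexSet_ofCoins f, hf⟩
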